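/- With R defined by the Little John Right-stop recursion, for all positive integers n, a, b with n ≥ a + b, R(n,a,b) ≤ R(n,a+1,b−1). -/
import Mathlib


/-- The Right stop of the Little John game `(n; a, b)^*`, computed along the
Little John path; the Left stop is `L n a b = -(ljR n b a)`. -/
def ljR : ℕ → ℕ → ℕ → ℤ
  | _, 0, 0 => 0
  | n, _+1, 0 => (n : ℤ)
  | n, 0, _+1 => -(n : ℤ)
  | n, a+1, b+1 =>
      -- γ = min (a+1) (b+1); R(n,a,b) = L(n-γ, a-γ, b) = -R(n-γ, b, a-γ)
      -(ljR (n - min (a + 1) (b + 1)) (b + 1) ((a + 1) - min (a + 1) (b + 1)))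
  termination_by n a b => a + b
  decreasing_by omega

lemma ljR_unfold (n a b : ℕ) (ha : 0 < a) (hb : 0 < b) :
    ljR n a b = -(ljR (n - min a b) b (a - min a b)) := by
  obtain ⟨a, rfl⟩ : ∃ a', a = a' + 1 := ⟨a - 1, by omega⟩
  obtain ⟨b, rfl⟩ : ∃ b', b = b' + 1 := ⟨b - 1, by omega⟩
  rw [ljR]

lemma ljR_a0 (n b : ℕ) (hb : 0 < b) : ljR n 0 b = -(n : ℤ) := by
  obtain ⟨b, rfl⟩ : ∃ b', b = b' + 1 := ⟨b - 1, by omega⟩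
  rw [ljR]

lemma ljR_b0 (n a : ℕ) (ha : 0 < a) : ljR n a 0 = (n : ℤ) := by
  obtain ⟨a, rfl⟩ : ∃ a', a = a' + 1 := ⟨a - 1, by omega⟩
  rw [ljR]

/-- Absolute bound: `|R(n,a,b)| ≤ n`. -/
lemma ljR_abs : ∀ (k n a b : ℕ), a + b ≤ k → -(n : ℤ) ≤ ljR n a b ∧ ljR n a b ≤ (n : ℤ) := by
  intro k
  induction k with
  | zero =>
    intro n a b h
    obtain ⟨rfl, rfl⟩ : a = 0 ∧ b = 0 := by omega
    rw [ljR]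
    omega
  | succ k ih =>
    intro n a b h
    rcases Nat.eq_zero_or_pos a with rfl | ha
    · rcases Nat.eq_zero_or_pos b with rfl | hb
      · rw [ljR]; omega
      · rw [ljR_a0 n b hb]; omega
    rcases Nat.eq_zero_or_pos b with rfl | hb
    · rw [ljR_b0 n a ha]; omega
    rw [ljR_unfold n a b ha hb]
    have hrec := ih (n - min a b) b (a - min a b) (by omega)
    have hc : ((n - min a b : ℕ) : ℤ) ≤ (n : ℤ) := by exact_mod_cast Nat.sub_le _ _
    have hc0 : (0 : ℤ) ≤ ((n - min a b : ℕ) : ℤ) := Int.natCast_nonneg _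
    constructor <;> omega

/-- Bounds: for `a + b ≤ n`, `a - n ≤ R(n,a,b) ≤ n - 2b`. -/
lemma ljR_bounds : ∀ (k n a b : ℕ), a + b ≤ k → a + b ≤ n →
    (a : ℤ) - n ≤ ljR n a b ∧ ljR n a b ≤ (n : ℤ) - 2 * b := by
  intro k
  induction k with
  | zero =>
    intro n a b h hn
    obtain ⟨rfl, rfl⟩ : a = 0 ∧ b = 0 := by omega
    rw [ljR]
    omega
  | succ k ih =>
    intro n a b h hn
    rcases Nat.eq_zero_or_pos a with rfl | ha
    · rcases Nat.eq_zero_or_pos b with rfl | hb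
      · rw [ljR]; omega
      · rw [ljR_a0 n b hb]
        have : b ≤ n := by omega
        constructor <;> omega
    rcases Nat.eq_zero_or_pos b with rfl | hb
    · rw [ljR_b0 n a ha]
      have : (a : ℤ) ≤ n := by exact_mod_cast hn
      constructor <;> omega
    rw [ljR_unfold n a b ha hb]
    rcases le_or_gt a b with hab | hab
    · -- min = a, third argument is 0
      rw [min_eq_left hab, Nat.sub_self, ljR_b0 _ b hb]
      have hcast : ((n - a : ℕ) : ℤ) = (n : ℤ) - a := by
        rw [Nat.cast_sub (by omega)]
      rw [hcast]
      have hb' : (b : ℤ) ≥ 1 := by exact_mod_cast hb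
      have : (a : ℤ) + b ≤ n := by exact_mod_cast hn
      constructor <;> omega
    · -- min = b
      rw [min_eq_right hab.le]
      have hrec := ih (n - b) b (a - b) (by omega) (by omega)
      have hcast : ((n - b : ℕ) : ℤ) = (n : ℤ) - b := by
        rw [Nat.cast_sub (by omega)]
      have hcast2 : ((a - b : ℕ) : ℤ) = (a : ℤ) - b := by
        rw [Nat.cast_sub (by omega)]
      rw [hcast, hcast2] at hrec
      have hab' : (b : ℤ) ≤ a := by exact_mod_cast hab.le
      constructor <;> omega

/-- Main mutual induction: the monotonicity statement together with
`R(n+1, a, b+1) ≤ R(n, a, b)`. -/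
lemma ljR_main : ∀ (k n a b : ℕ), a + b ≤ k →
    ((0 < a → 0 < b → a + b ≤ n → ljR n a b ≤ ljR n (a + 1) (b - 1)) ∧
     (a + b ≤ n → ljR (n + 1) a (b + 1) ≤ ljR n a b)) := by
  intro k
  induction k with
  | zero =>
    intro n a b h
    obtain ⟨rfl, rfl⟩ : a = 0 ∧ b = 0 := by omega
    constructor
    · intro ha; omega
    · intro _
      rw [ljR_a0 (n+1) 1 one_pos, ljR]
      push_cast; omega
  | succ k ih =>
    intro n a b h
    constructor
    · -- main monotonicity
      intro ha hb hn
      rcases Nat.eq_zero_or_pos (b - 1) with hb1 | hb1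
      · -- b = 1
        have hb1' : b = 1 := by omega
        subst hb1'
        rw [show (1 : ℕ) - 1 = 0 from rfl, ljR_b0 n (a+1) (by omega)]
        have := (ljR_bounds (a + 1) n a 1 (by omega) hn).2
        omega
      · -- b ≥ 2
        have hb2 : 2 ≤ b := by omega
        rcases lt_or_ge a (b - 1) with hab | hab
        · -- a + 1 ≤ b - 1 : both sides in closed form
          rw [ljR_unfold n a b ha hb, min_eq_left (by omega), Nat.sub_self,
            ljR_b0 _ b hb,
            ljR_unfold n (a+1) (b-1) (by omega) hb1, min_eq_left (by omega),
            Nat.sub_self, ljR_b0 _ (b-1) hb1]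
          have h1 : ((n - a : ℕ) : ℤ) = (n : ℤ) - a := by rw [Nat.cast_sub (by omega)]
          have h2 : ((n - (a+1) : ℕ) : ℤ) = (n : ℤ) - a - 1 := by
            rw [Nat.cast_sub (by omega)]; push_cast; ring
          rw [h1, h2]; omega
        · -- a ≥ b - 1
          rcases lt_or_ge a b with hab2 | hab2
          · -- a = b - 1
            have hab3 : b = a + 1 := by omega
            subst hab3
            rw [ljR_unfold n a (a+1) ha hb, min_eq_left (by omega), Nat.sub_self,
              ljR_b0 _ (a+1) hb,
              ljR_unfold n (a+1) (a+1-1) (by omega) hb1]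
            rw [show a + 1 - 1 = a from rfl, min_eq_right (by omega),
              show a + 1 - a = 1 from by omega]
            have h1 : ((n - a : ℕ) : ℤ) = (n : ℤ) - a := by rw [Nat.cast_sub (by omega)]
            have habs := ljR_abs (a + 1) (n - a) a 1 (by omega)
            have h2 : ((n - a : ℕ) : ℤ) = (n : ℤ) - a := h1
            rw [h1] at *
            omega
          · -- a ≥ b, b ≥ 2
            rw [ljR_unfold n a b (by omega) hb, min_eq_right (by omega),
              ljR_unfold n (a+1) (b-1) (by omega) hb1, min_eq_right (by omega)]
            have e1 : n - (b - 1) = (n - b) + 1 := by omega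
            have e2 : a + 1 - (b - 1) = (a - b) + 2 := by omega
            rw [e1, e2]
            have step1 := (ih (n - b + 1) (b - 1) (a - b + 2) (by omega)).1
              (by omega) (by omega) (by omega)
            rw [show b - 1 + 1 = b from by omega, show a - b + 2 - 1 = a - b + 1 from by omega]
              at step1
            have step2 := (ih (n - b) b (a - b) (by omega)).2 (by omega)
            omega
    · -- the shift lemma
      intro hn
      rcases Nat.eq_zero_or_pos a with rfl | ha
      · rw [ljR_a0 (n+1) (b+1) (by omega)]
        rcases Nat.eq_zero_or_pos b with rfl | hb
        · rw [ljR]; push_cast; omega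
        · rw [ljR_a0 n b hb]; push_cast; omega
      rcases Nat.eq_zero_or_pos b with rfl | hb
      · -- b = 0
        rw [ljR_b0 n a ha]
        have := (ljR_bounds (a + 1) (n + 1) a 1 (by omega) (by omega)).2
        push_cast at this ⊢
        omega
      · rcases lt_or_ge a b with hab | hab
        · -- a ≤ b, a < b+1 : both closed form
          rw [ljR_unfold (n+1) a (b+1) ha (by omega), min_eq_left (by omega),
            Nat.sub_self, ljR_b0 _ (b+1) (by omega),
            ljR_unfold n a b ha hb, min_eq_left (by omega), Nat.sub_self,
            ljR_b0 _ b hb]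
          have h1 : ((n + 1 - a : ℕ) : ℤ) = (n : ℤ) + 1 - a := by
            rw [Nat.cast_sub (by omega)]; push_cast; ring
          have h2 : ((n - a : ℕ) : ℤ) = (n : ℤ) - a := by rw [Nat.cast_sub (by omega)]
          rw [h1, h2]; omega
        · rcases eq_or_lt_of_le hab with hab2 | hab2
          · -- a = b
            obtain rfl : a = b := hab2.symm
            rw [ljR_unfold (n+1) a (a+1) ha (by omega), min_eq_left (by omega),
              Nat.sub_self, ljR_b0 _ (a+1) (by omega),
              ljR_unfold n a a ha hb, min_self, Nat.sub_self,
              ljR_b0 _ a ha]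
            have h1 : ((n + 1 - a : ℕ) : ℤ) = (n : ℤ) + 1 - a := by
              rw [Nat.cast_sub (by omega)]; push_cast; ring
            have h2 : ((n - a : ℕ) : ℤ) = (n : ℤ) - a := by rw [Nat.cast_sub (by omega)]
            rw [h1, h2]; omega
          · rcases eq_or_lt_of_le (Nat.succ_le_of_lt hab2) with hab3 | hab3
            · -- a = b + 1
              obtain rfl : a = b + 1 := hab3.symm
              rw [ljR_unfold (n+1) (b+1) (b+1) ha (by omega), min_self,
                Nat.sub_self, ljR_b0 _ (b+1) (by omega),
                ljR_unfold n (b+1) b ha hb, min_eq_right (by omega)]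
              have e1 : n + 1 - (b + 1) = n - b := by omega
              have e2 : b + 1 - b = 1 := by omega
              rw [e1, e2]
              have habs := ljR_abs (b + 1) (n - b) b 1 (by omega)
              omega
            · -- a > b + 1
              rw [ljR_unfold (n+1) a (b+1) ha (by omega), min_eq_right (by omega),
                ljR_unfold n a b ha hb, min_eq_right (by omega)]
              have e1 : n + 1 - (b + 1) = n - b := by omega
              have e2 : a - (b + 1) = (a - b) - 1 := by omega
              rw [e1, e2]
              have step := (ih (n - b) b (a - b) (by omega)).1 hb (by omega) (by omega)
              rw [show b + 1 = b + 1 from rfl] at step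
              omega

theorem ljR_monotone_twice (n a b : ℕ) (hn : 0 < n) (ha : 0 < a) (hb : 0 < b)
    (h : a + b ≤ n) :
    ljR n a b ≤ ljR n (a + 1) (b - 1) := by
  exact (ljR_main (a + b) n a b le_rfl).1 ha hb h
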